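/- Let e ≥ 1 be an integer and let F₁, F₂ ∈ ℂ[X,Y,Z] be homogeneous polynomials of degree e whose common zero set W in ℙ² consists of exactly e² distinct points. Then every homogeneous polynomial G of degree 2e − 1 in ℂ[X,Y,Z] vanishing at every point of W can be written as G = aF₁ + bF₂ with a, b ∈ ℂ[X,Y,Z] homogeneous of degree e − 1. -/

import Mathlib

/-!
Choose a line `ℓ = 0` missing the `e²` common zeros `W` (from the family `lineForm t`). On that
line `F₁, F₂` restrict to binary forms without common zero, hence coprime; so `F₁, F₂` are coprime
and `ℓ` is a nonzerodivisor modulo `(F₁, F₂)`. In degree `N = e² + 2e` products of linear forms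
separate the points of `W`, so the forms of degree `N` vanishing on `W` have codimension `e²`; by
the Koszul syzygies `(F₁, F₂)` has the same codimension `e²` in degree `N`, so the two spaces agree.
Hence `ℓ ^ (e² + 1) * G ∈ (F₁, F₂)`; cancelling `ℓ` and taking homogeneous components of the
coefficients gives the claim.
-/

open MvPolynomial

noncomputable section

/-- The complex projective plane. -/
abbrev P2 : Type := Projectivization ℂ (Fin 3 → ℂ)

/-- A (homogeneous) polynomial `G` vanishes at a point `p ∈ ℙ²`. -/
def VanAt (G : MvPolynomial (Fin 3) ℂ) (p : P2) : Prop :=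
  eval p.rep G = 0

/-- The submodule of polynomials vanishing at every point of `S`. -/
def vanishing (S : Set P2) : Submodule ℂ (MvPolynomial (Fin 3) ℂ) where
  carrier := {G | ∀ p ∈ S, VanAt G p}
  add_mem' := by
    intro a b ha hb p hp
    have h1 := ha p hp
    have h2 := hb p hp
    simp only [VanAt] at h1 h2 ⊢
    simp [h1, h2]
  zero_mem' := by
    intro p hp
    simp [VanAt]
  smul_mem' := by
    intro c G hG p hp
    have h1 := hG p hp
    simp only [VanAt] at h1 ⊢
    simp [h1]

/-- `V_k(S)`: homogeneous polynomials of degree `k` (together with `0`)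
vanishing at every point of `S`. -/
def Vsp (k : ℕ) (S : Set P2) : Submodule ℂ (MvPolynomial (Fin 3) ℂ) :=
  homogeneousSubmodule (Fin 3) ℂ k ⊓ vanishing S

/-- `p` is a singular point of the curve `F = 0`. -/
def SingPt (F : MvPolynomial (Fin 3) ℂ) (p : P2) : Prop :=
  ∀ i : Fin 3, eval p.rep (pderiv i F) = 0

/-- `p` is a node of the curve `F = 0`. -/
def IsNode (F : MvPolynomial (Fin 3) ℂ) (p : P2) : Prop :=
  SingPt F p ∧
    (Matrix.of fun i j : Fin 3 => eval p.rep (pderiv i (pderiv j F))).rank = 2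

/-- The curve `F = 0` is nodal: every singular point is a node. -/
def Nodal (F : MvPolynomial (Fin 3) ℂ) : Prop :=
  ∀ p : P2, SingPt F p → IsNode F p

/-- The set of nodes of the curve `F = 0`. -/
def nodes (F : MvPolynomial (Fin 3) ℂ) : Set P2 :=
  {p | IsNode F p}

/-- The common zero set in `ℙ²` of two polynomials. -/
def zeroSet (F₁ F₂ : MvPolynomial (Fin 3) ℂ) : Set P2 :=
  {p | VanAt F₁ p ∧ VanAt F₂ p}

namespace MvPolynomial

variable {σ K : Type*}

instance [Field K] [Finite σ] (n : ℕ) : FiniteDimensional K (homogeneousSubmodule σ K n) :=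
  Module.Finite.iff_fg.mpr (homogeneousSubmodule_fg σ K n)

theorem IsHomogeneous.eval_smul [CommSemiring K] {φ : MvPolynomial σ K} {n : ℕ}
    (hφ : φ.IsHomogeneous n) (c : K) (v : σ → K) : eval (c • v) φ = c ^ n * eval v φ := by
  rw [φ.as_sum, map_sum, map_sum, Finset.mul_sum]
  refine Finset.sum_congr rfl fun d hd => ?_
  have hdeg : ∑ i ∈ d.support, d i = n := by
    rw [← hφ (mem_support_iff.mp hd), Finsupp.weight_apply]
    simp [Finsupp.sum]
  simp only [eval_monomial, Finsupp.prod, Pi.smul_apply, smul_eq_mul, mul_pow,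
    Finset.prod_mul_distrib, Finset.prod_pow_eq_pow_sum, hdeg]
  ring

theorem homogeneousComponent_add_mul_of_isHomogeneous [CommSemiring K] {F : MvPolynomial σ K}
    {e : ℕ} (hF : F.IsHomogeneous e) (a : MvPolynomial σ K) (n : ℕ) :
    homogeneousComponent (n + e) (a * F) = homogeneousComponent n a * F := by
  classical
  let _ := MvPolynomial.gradedAlgebra (σ := σ) (R := K)
  have := DirectSum.coe_decompose_mul_add_of_right_mem (homogeneousSubmodule σ K)
      (a := a) (i := n) ((mem_homogeneousSubmodule e F).mpr hF)
  rwa [← decomposition.decompose'_apply, ← decomposition.decompose'_apply]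

theorem exists_isHomogeneous_of_mem_span_pair [CommSemiring K] {F₁ F₂ G : MvPolynomial σ K}
    {e n : ℕ} (h₁ : F₁.IsHomogeneous e) (h₂ : F₂.IsHomogeneous e) (hG : G.IsHomogeneous (n + e))
    (hspan : G ∈ Ideal.span {F₁, F₂}) :
    ∃ a b : MvPolynomial σ K, a.IsHomogeneous n ∧ b.IsHomogeneous n ∧ G = a * F₁ + b * F₂ := by
  obtain ⟨a, b, rfl⟩ := Ideal.mem_span_pair.mp hspan
  refine ⟨homogeneousComponent n a, homogeneousComponent n b,
    homogeneousComponent_isHomogeneous _ _, homogeneousComponent_isHomogeneous _ _, ?_⟩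
  rw [← homogeneousComponent_add_mul_of_isHomogeneous h₁,
    ← homogeneousComponent_add_mul_of_isHomogeneous h₂, ← map_add,
    homogeneousComponent_eq_self hG]

theorem order_coe_le_totalDegree [CommSemiring K] {f : MvPolynomial σ K} (hf : f ≠ 0) :
    (f : MvPowerSeries σ K).order ≤ f.totalDegree := by
  obtain ⟨d, hd⟩ := exists_coeff_ne_zero hf
  exact (MvPowerSeries.order_le (by rwa [coeff_coe])).trans
    (by exact_mod_cast le_totalDegree (mem_support_iff.mpr hd))

theorem isHomogeneous_totalDegree_of_le_order [CommSemiring K] {f : MvPolynomial σ K}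
    (hf : (f.totalDegree : ℕ∞) ≤ (f : MvPowerSeries σ K).order) :
    f.IsHomogeneous f.totalDegree := by
  intro d hd
  have h₁ : (f : MvPowerSeries σ K).order ≤ d.degree :=
    MvPowerSeries.order_le (by rwa [coeff_coe])
  have h₂ : d.degree ≤ f.totalDegree := le_totalDegree (mem_support_iff.mpr hd)
  show Finsupp.weight (fun _ => 1) d = _
  rw [← Finsupp.degree_eq_weight_one]
  exact le_antisymm h₂ (by exact_mod_cast hf.trans h₁)

theorem IsHomogeneous.le_order_coe [CommSemiring K] {f : MvPolynomial σ K} {n : ℕ}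
    (hf : f.IsHomogeneous n) : (n : ℕ∞) ≤ (f : MvPowerSeries σ K).order :=
  MvPowerSeries.nat_le_order fun d hd => by
    rw [coeff_coe]
    exact hf.coeff_eq_zero hd.ne

/-- In a domain both the lowest degree (the order of the power series) and the total degree are
additive on products; they agree for `p * q`, hence for `p`. -/
theorem IsHomogeneous.of_mul_left [CommRing K] [IsDomain K] {p q : MvPolynomial σ K} {n : ℕ}
    (h : (p * q).IsHomogeneous n) (hpq : p * q ≠ 0) : p.IsHomogeneous p.totalDegree := by
  have hp : p ≠ 0 := left_ne_zero_of_mul hpq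
  have hq : q ≠ 0 := right_ne_zero_of_mul hpq
  have hdeg : p.totalDegree + q.totalDegree = n := by
    rw [← totalDegree_mul_of_isDomain hp hq, h.totalDegree hpq]
  have hord := h.le_order_coe
  rw [coe_mul, MvPowerSeries.order_mul] at hord
  have hpo := order_coe_le_totalDegree hp
  have hqo := order_coe_le_totalDegree hq
  apply isHomogeneous_totalDegree_of_le_order
  obtain ⟨a, ha⟩ := ENat.ne_top_iff_exists.mp (ne_top_of_le_ne_top (ENat.natCast_ne_top _) hpo)
  obtain ⟨b, hb⟩ := ENat.ne_top_iff_exists.mp (ne_top_of_le_ne_top (ENat.natCast_ne_top _) hqo)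
  rw [← ha] at hord hpo ⊢
  rw [← hb] at hord hqo
  norm_cast at hord hpo hqo ⊢
  omega

theorem isRelPrime_of_isHomogeneous [Field K] {A B : MvPolynomial σ K} {n : ℕ}
    (hA : A.IsHomogeneous n) (hA₀ : A ≠ 0)
    (h : ∀ (d : MvPolynomial σ K) (k : ℕ), k ≠ 0 → d.IsHomogeneous k → d ∣ A → d ∣ B → False) :
    IsRelPrime A B := by
  rintro d ⟨c, rfl⟩ hdB
  have hd₀ : d ≠ 0 := left_ne_zero_of_mul hA₀
  by_cases hk : d.totalDegree = 0
  · rw [totalDegree_eq_zero_iff_eq_C] at hk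
    rw [hk] at hd₀ ⊢
    exact (Ne.isUnit fun h => hd₀ (by rw [h, C_0])).map C
  · exact (h d _ hk (hA.of_mul_left hA₀) (dvd_mul_right d c) hdB).elim

theorem exists_ne_zero_eval_eq_zero_of_isHomogeneous [Field K] [IsAlgClosed K]
    {q : MvPolynomial (Fin 2) K} {n : ℕ} (hq : q.IsHomogeneous n) (hn : n ≠ 0) :
    ∃ w : Fin 2 → K, w ≠ 0 ∧ eval w q = 0 := by
  generalize hp_def : aeval ![(Polynomial.X : Polynomial K), 1] q = p
  by_cases hp : p.degree = 0
  · have h := Polynomial.homogenize_eq_of_isHomogeneous hq hp_def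
    rw [Polynomial.eq_C_of_degree_eq_zero hp, Polynomial.homogenize_C] at h
    refine ⟨![1, 0], fun h => one_ne_zero (congrFun h 0), ?_⟩
    simp [← h, hn]
  · obtain ⟨r, hr⟩ := IsAlgClosed.exists_root p hp
    refine ⟨![r, 1], fun h => one_ne_zero (congrFun h 1), ?_⟩
    rw [← hr.eq_zero, ← hp_def, aeval_def, polynomial_eval_eval₂, eval, coe_eval₂Hom]
    congr 1
    · exact RingHom.ext fun x => by simp
    · funext i
      fin_cases i <;> simp

theorem ne_zero_of_forall_eval_ne_zero [Field K] [IsAlgClosed K] {A B : MvPolynomial (Fin 2) K}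
    {n : ℕ} (hB : B.IsHomogeneous n) (hn : n ≠ 0)
    (hAB : ∀ w : Fin 2 → K, w ≠ 0 → eval w A = 0 → eval w B ≠ 0) : A ≠ 0 := by
  rintro rfl
  obtain ⟨w, hw, hBw⟩ := exists_ne_zero_eval_eq_zero_of_isHomogeneous hB hn
  exact hAB w hw (map_zero _) hBw

theorem isRelPrime_of_forall_eval_ne_zero [Field K] [IsAlgClosed K]
    {A B : MvPolynomial (Fin 2) K} {n : ℕ} (hA : A.IsHomogeneous n) (hA₀ : A ≠ 0)
    (hAB : ∀ w : Fin 2 → K, w ≠ 0 → eval w A = 0 → eval w B ≠ 0) : IsRelPrime A B :=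
  isRelPrime_of_isHomogeneous hA hA₀ fun _ _ hk hd ⟨_, ha⟩ ⟨_, hb⟩ => by
    obtain ⟨w, hw, hdw⟩ := exists_ne_zero_eval_eq_zero_of_isHomogeneous hd hk
    exact hAB w hw (by simp [ha, hdw]) (by simp [hb, hdw])

theorem finrank_homogeneousSubmodule [Field K] (k n : ℕ) :
    Module.finrank K (homogeneousSubmodule (Fin k) K n) = (k + n - 1).choose n := by
  classical
  have hset : {d : Fin k →₀ ℕ | d.degree = n} =
      ↑((Finset.univ : Finset (Fin k)).finsuppAntidiag n) := by
    ext d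
    simp [Finset.mem_finsuppAntidiag, Finsupp.degree_eq_sum]
  rw [homogeneousSubmodule_eq_finsupp_supported, hset,
    (AddMonoidAlgebra.supportedEquivFinsupp _).finrank_eq, Module.finrank_finsupp_self]
  simp [Finset.card_finsuppAntidiag_nat_eq_choose]

/-- `e²` is the second difference, with step `e`, of the Hilbert function `(n + 1) (n + 2) / 2`. -/
theorem finrank_homogeneousSubmodule_add_two_mul [Field K] (m e : ℕ) :
    Module.finrank K (homogeneousSubmodule (Fin 3) K (m + 2 * e)) +
        Module.finrank K (homogeneousSubmodule (Fin 3) K m) =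
      2 * Module.finrank K (homogeneousSubmodule (Fin 3) K (m + e)) + e ^ 2 := by
  have two_mul_finrank (n : ℕ) :
      2 * Module.finrank K (homogeneousSubmodule (Fin 3) K n) = (n + 1) * (n + 2) := by
    rw [finrank_homogeneousSubmodule, show 3 + n - 1 = n + 2 by omega, Nat.choose_symm_add]
    have := Nat.add_one_mul_choose_eq (n + 1) 1
    simp only [Nat.choose_one_right] at this
    linarith
  nlinarith [two_mul_finrank m, two_mul_finrank (m + e), two_mul_finrank (m + 2 * e)]

section Koszul

variable [Field K] {F₁ F₂ : MvPolynomial σ K} {e : ℕ}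

def pairMul (F₁ F₂ : MvPolynomial σ K) (n : ℕ) :
    (homogeneousSubmodule σ K n × homogeneousSubmodule σ K n) →ₗ[K] MvPolynomial σ K :=
  ((LinearMap.mulRight K F₁).comp (homogeneousSubmodule σ K n).subtype).coprod
    ((LinearMap.mulRight K F₂).comp (homogeneousSubmodule σ K n).subtype)

@[simp]
theorem pairMul_apply (n : ℕ) (x : homogeneousSubmodule σ K n × homogeneousSubmodule σ K n) :
    pairMul F₁ F₂ n x = x.1 * F₁ + x.2 * F₂ :=
  rfl

theorem mul_mem_homogeneousSubmodule {F a : MvPolynomial σ K} {m : ℕ}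
    (hF : F.IsHomogeneous e) (ha : a ∈ homogeneousSubmodule σ K m) :
    a * F ∈ homogeneousSubmodule σ K (m + e) :=
  (mem_homogeneousSubmodule _ _).mpr (((mem_homogeneousSubmodule _ _).mp ha).mul hF)

/-- For coprime `F₁, F₂` every syzygy `a F₁ + b F₂ = 0` is a Koszul syzygy `(c F₂, -c F₁)`. -/
theorem finrank_ker_pairMul_le [Finite σ] (h₁ : F₁.IsHomogeneous e) (h₂ : F₂.IsHomogeneous e)
    (hrel : IsRelPrime F₁ F₂) (hF₂ : F₂ ≠ 0) (m : ℕ) :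
    Module.finrank K (LinearMap.ker (pairMul F₁ F₂ (m + e))) ≤
      Module.finrank K (homogeneousSubmodule σ K m) := by
  let mul (F : MvPolynomial σ K) (hF : F.IsHomogeneous e) :=
    (LinearMap.mulRight K F).restrict fun a ha => mul_mem_homogeneousSubmodule (m := m) hF ha
  let syz := (mul F₂ h₂).prod (-mul F₁ h₁)
  have hker : LinearMap.ker (pairMul F₁ F₂ (m + e)) ≤ LinearMap.range syz := by
    rintro ⟨⟨a, ha⟩, ⟨b, hb⟩⟩ hab
    replace hab : a * F₁ + b * F₂ = 0 := hab
    obtain ⟨c, rfl⟩ : F₂ ∣ a :=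
      hrel.symm.dvd_of_dvd_mul_right ⟨-b, by linear_combination hab⟩
    set c' := homogeneousComponent m c
    have hc : F₂ * c = c' * F₂ := by
      rw [← homogeneousComponent_add_mul_of_isHomogeneous h₂, mul_comm,
        homogeneousComponent_eq_self ((mem_homogeneousSubmodule _ _).mp (by rwa [mul_comm] at ha))]
    have hb' : b = -(c' * F₁) :=
      mul_right_cancel₀ hF₂ (by linear_combination hab - F₁ * hc)
    refine ⟨⟨c', homogeneousComponent_mem m c⟩, Prod.ext (Subtype.ext hc.symm) (Subtype.ext ?_)⟩
    simp only [syz, mul, hb', LinearMap.prod_apply]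
    rfl
  exact (Submodule.finrank_mono hker).trans (LinearMap.finrank_range_le syz)

end Koszul

end MvPolynomial

theorem Submodule.finrank_inf_ker_add_finrank_map {K V V' : Type*} [DivisionRing K]
    [AddCommGroup V] [Module K V] [AddCommGroup V'] [Module K V'] (p : Submodule K V)
    [FiniteDimensional K p] (f : V →ₗ[K] V') :
    Module.finrank K ↥(p ⊓ LinearMap.ker f) + Module.finrank K ↥(p.map f) =
      Module.finrank K p := by
  rw [← Submodule.map_comap_subtype, Submodule.finrank_map_subtype_eq,
    ← LinearMap.ker_domRestrict, ← LinearMap.range_domRestrict, add_comm]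
  exact (f.domRestrict p).finrank_range_add_finrank_ker

section Cancel

variable {R S Φ : Type*} [CommRing R] [IsDomain R] [CommRing S] [IsDomain S]
  [DecompositionMonoid S] [FunLike Φ R S] [RingHomClass Φ R S] (π : Φ) {ℓ F₁ F₂ g : R}

theorem mem_span_pair_of_mul_mem (hπ : Function.Surjective π) (hℓ : ℓ ≠ 0)
    (hker : RingHom.ker π = Ideal.span {ℓ}) (hrel : IsRelPrime (π F₁) (π F₂)) (hF₂ : π F₂ ≠ 0)
    (h : ℓ * g ∈ Ideal.span {F₁, F₂}) : g ∈ Ideal.span {F₁, F₂} := by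
  have dvd_of_map_eq_zero : ∀ x, π x = 0 → ℓ ∣ x := fun x hx =>
    Ideal.mem_span_singleton.mp (hker ▸ RingHom.mem_ker.mpr hx)
  have hπℓ : π ℓ = 0 := RingHom.mem_ker.mp (hker ▸ Ideal.mem_span_singleton_self ℓ)
  obtain ⟨a, b, hab⟩ := Ideal.mem_span_pair.mp h
  have hbar : π a * π F₁ + π b * π F₂ = 0 := by
    simpa [hπℓ] using congrArg π hab
  obtain ⟨m', hm'⟩ := hrel.symm.dvd_of_dvd_mul_right
    (⟨-π b, by linear_combination hbar⟩ : π F₂ ∣ π a * π F₁)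
  obtain ⟨m, rfl⟩ := hπ m'
  obtain ⟨a', ha'⟩ := dvd_of_map_eq_zero (a - m * F₂) <| by
    rw [map_sub, map_mul, hm', mul_comm, sub_self]
  obtain ⟨b', hb'⟩ := dvd_of_map_eq_zero (b + m * F₁) <| (mul_eq_zero.mp <| by
    have := congrArg π (show (b + m * F₁) * F₂ = ℓ * (g - a' * F₁) by
      linear_combination hab - F₁ * ha')
    rwa [map_mul, map_mul, hπℓ, zero_mul] at this).resolve_right hF₂
  refine Ideal.mem_span_pair.mpr ⟨a', b', mul_left_cancel₀ hℓ ?_⟩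
  linear_combination hab - ha' * F₁ - hb' * F₂

theorem mem_span_pair_of_pow_mul_mem (hπ : Function.Surjective π) (hℓ : ℓ ≠ 0)
    (hker : RingHom.ker π = Ideal.span {ℓ}) (hrel : IsRelPrime (π F₁) (π F₂)) (hF₂ : π F₂ ≠ 0)
    (k : ℕ) (h : ℓ ^ k * g ∈ Ideal.span {F₁, F₂}) : g ∈ Ideal.span {F₁, F₂} := by
  induction k generalizing g with
  | zero => simpa using h
  | succ k ih =>
    exact mem_span_pair_of_mul_mem π hπ hℓ hker hrel hF₂ (ih (by rwa [← mul_assoc, ← pow_succ]))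

end Cancel

section Line

variable {K : Type*} [Field K] (t : K)

/-- As `t` varies, `lineForm t` traces a conic in the dual plane, so each point of the plane lies
on at most two of the lines `lineForm t = 0`. -/
def lineForm : MvPolynomial (Fin 3) K := X 0 + C t * X 1 + C (t ^ 2) * X 2

/-- Restriction to the line `lineForm t = 0`, parametrised by `(y, z) ↦ (-(t y + t² z), y, z)`. -/
def restrictLine : MvPolynomial (Fin 3) K →ₐ[K] MvPolynomial (Fin 2) K :=
  aeval ![-(C t * X 0 + C (t ^ 2) * X 1), X 0, X 1]

def linePoint (w : Fin 2 → K) : Fin 3 → K := ![-(t * w 0 + t ^ 2 * w 1), w 0, w 1]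

theorem restrictLine_lineForm : restrictLine t (lineForm t) = 0 := by
  simp [restrictLine, lineForm]

theorem restrictLine_rename_succ (f : MvPolynomial (Fin 2) K) :
    restrictLine t (rename Fin.succ f) = f := by
  rw [restrictLine, aeval_rename]
  convert aeval_X_left_apply f
  funext i
  fin_cases i <;> rfl

theorem restrictLine_surjective : Function.Surjective (restrictLine t) :=
  fun f => ⟨_, restrictLine_rename_succ t f⟩

theorem ker_restrictLine : RingHom.ker (restrictLine t) = Ideal.span {lineForm t} := by
  refine le_antisymm (fun F hF => ?_) ?_
  · set I := Ideal.span {lineForm t}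
    have hπ : Ideal.Quotient.mkₐ K I =
        (Ideal.Quotient.mkₐ K I).comp ((rename Fin.succ).comp (restrictLine t)) := by
      refine algHom_ext fun i => ?_
      fin_cases i
      · simp only [AlgHom.comp_apply, Ideal.Quotient.mkₐ_eq_mk]
        refine Ideal.Quotient.eq.mpr (Ideal.mem_span_singleton.mpr ⟨1, ?_⟩)
        simp only [Fin.zero_eta, Fin.isValue, restrictLine, aeval_eq_bind₁, bind₁_X_right,
          Matrix.cons_val_zero, map_add, map_neg, map_mul, algHom_C, algebraMap_eq, rename_X,
          Fin.succ_one_eq_two, Fin.succ_zero_eq_one, lineForm]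
        ring
      all_goals simp [restrictLine]
    have := congrArg (· F) hπ
    simp only [AlgHom.comp_apply, RingHom.mem_ker.mp hF, map_zero,
      Ideal.Quotient.mkₐ_eq_mk] at this
    exact Ideal.Quotient.eq_zero_iff_mem.mp this
  · exact Ideal.span_le.mpr (Set.singleton_subset_iff.mpr (restrictLine_lineForm t))

theorem lineForm_ne_zero : lineForm t ≠ 0 := fun h => by
  simpa [lineForm] using congrArg (eval ![1, 0, 0]) h

theorem isHomogeneous_lineForm : (lineForm t).IsHomogeneous 1 :=
  ((isHomogeneous_X _ _).add (isHomogeneous_C_mul_X _ _)).add (isHomogeneous_C_mul_X _ _)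

theorem MvPolynomial.IsHomogeneous.restrictLine {F : MvPolynomial (Fin 3) K} {n : ℕ}
    (hF : F.IsHomogeneous n) : (restrictLine t F).IsHomogeneous n := by
  have hg : ∀ i, (![-(C t * X 0 + C (t ^ 2) * X 1), X 0, X 1] i :
      MvPolynomial (Fin 2) K).IsHomogeneous 1 := by
    intro i
    fin_cases i
    · exact ((isHomogeneous_C_mul_X _ _).add (isHomogeneous_C_mul_X _ _)).neg
    all_goals exact isHomogeneous_X _ _
  rw [_root_.restrictLine]
  simpa only [one_mul] using hF.aeval _ hg

theorem eval_restrictLine (w : Fin 2 → K) (F : MvPolynomial (Fin 3) K) :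
    eval w (restrictLine t F) = eval (linePoint t w) F := by
  rw [← aeval_eq_eval, restrictLine, comp_aeval_apply, aeval_eq_eval]
  congr 2
  funext i
  fin_cases i <;> simp [linePoint]

theorem eval_linePoint_lineForm (w : Fin 2 → K) : eval (linePoint t w) (lineForm t) = 0 := by
  simp [linePoint, lineForm]

theorem linePoint_ne_zero {w : Fin 2 → K} (hw : w ≠ 0) : linePoint t w ≠ 0 := fun h =>
  hw (funext fun i => by
    fin_cases i
    · simpa [linePoint] using congrFun h 1
    · simpa [linePoint] using congrFun h 2)

theorem finite_setOf_eval_lineForm_eq_zero {v : Fin 3 → K} (hv : v ≠ 0) :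
    {t : K | eval v (lineForm t) = 0}.Finite := by
  let P : Polynomial K := .C (v 0) + .C (v 1) * .X + .C (v 2) * .X ^ 2
  have hP : P ≠ 0 := fun h => hv <| funext fun i => by
    fin_cases i
    · simpa [P] using congrArg (Polynomial.coeff · 0) h
    · simpa [P] using congrArg (Polynomial.coeff · 1) h
    · simpa [P] using congrArg (Polynomial.coeff · 2) h
  refine (Polynomial.finite_setOfPred_isRoot hP).subset fun s hs => ?_
  simp only [lineForm, map_add, map_mul, eval_X, eval_C, Set.mem_ofPred_eq] at hs
  simp only [Polynomial.IsRoot.def, Polynomial.eval_add, Polynomial.eval_C, Polynomial.eval_mul,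
    Polynomial.eval_X, Polynomial.eval_pow, Set.mem_ofPred_eq, P]
  linear_combination hs

theorem isRelPrime_of_restrictLine [IsAlgClosed K] {F₁ F₂ : MvPolynomial (Fin 3) K} {n : ℕ}
    (h₁ : F₁.IsHomogeneous n) (hbar₁ : restrictLine t F₁ ≠ 0)
    (hne : ∀ w : Fin 2 → K, w ≠ 0 → eval w (restrictLine t F₁) = 0 →
      eval w (restrictLine t F₂) ≠ 0) :
    IsRelPrime F₁ F₂ :=
  isRelPrime_of_isHomogeneous h₁ (fun h => hbar₁ (by rw [h, map_zero]))
    fun _ _ hk hd ⟨_, ha⟩ ⟨_, hb⟩ => by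
      obtain ⟨w, hw, hdw⟩ := exists_ne_zero_eval_eq_zero_of_isHomogeneous (hd.restrictLine t) hk
      exact hne w hw (by simp [ha, hdw]) (by simp [hb, hdw])

end Line

theorem vanAt_mk_iff {F : MvPolynomial (Fin 3) ℂ} {n : ℕ} (hF : F.IsHomogeneous n)
    {v : Fin 3 → ℂ} (hv : v ≠ 0) : VanAt F (Projectivization.mk ℂ v hv) ↔ eval v F = 0 := by
  obtain ⟨a, ha⟩ := Projectivization.exists_smul_eq_mk_rep ℂ v hv
  rw [VanAt, ← ha, Units.smul_def, hF.eval_smul, mul_eq_zero,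
    or_iff_right (pow_ne_zero _ a.ne_zero)]

theorem exists_lineForm_not_vanAt {W : Set P2} (hW : W.Finite) :
    ∃ t : ℂ, ∀ p ∈ W, ¬VanAt (lineForm t) p := by
  obtain ⟨t, ht⟩ :=
    (hW.biUnion fun p _ => finite_setOf_eval_lineForm_eq_zero p.rep_nonzero).exists_notMem
  exact ⟨t, fun p hp hvan => ht (Set.mem_biUnion hp hvan)⟩

theorem eval_restrictLine_ne_zero {F₁ F₂ : MvPolynomial (Fin 3) ℂ} {n₁ n₂ : ℕ}
    (h₁ : F₁.IsHomogeneous n₁) (h₂ : F₂.IsHomogeneous n₂) {t : ℂ}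
    (ht : ∀ p ∈ zeroSet F₁ F₂, ¬VanAt (lineForm t) p) {w : Fin 2 → ℂ} (hw : w ≠ 0)
    (hw₁ : eval w (restrictLine t F₁) = 0) : eval w (restrictLine t F₂) ≠ 0 := fun hw₂ => by
  have hv := linePoint_ne_zero t hw
  refine ht (Projectivization.mk ℂ _ hv) ⟨?_, ?_⟩
    ((vanAt_mk_iff (isHomogeneous_lineForm t) hv).mpr (eval_linePoint_lineForm t w))
  · rwa [vanAt_mk_iff h₁ hv, ← eval_restrictLine]
  · rwa [vanAt_mk_iff h₂ hv, ← eval_restrictLine]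

theorem exists_linear_not_vanAt_vanAt {p q : P2} (h : p ≠ q) :
    ∃ L : MvPolynomial (Fin 3) ℂ, L.IsHomogeneous 1 ∧ ¬VanAt L p ∧ VanAt L q := by
  have hnot : p.rep ∉ Submodule.span ℂ {q.rep} := fun hmem => h <| by
    obtain ⟨a, ha⟩ := Submodule.mem_span_singleton.mp hmem
    rw [← p.mk_rep, ← q.mk_rep]
    exact (Projectivization.mk_eq_mk_iff' ℂ _ _ p.rep_nonzero q.rep_nonzero).mpr ⟨a, ha⟩
  obtain ⟨f, hfp, hfq⟩ := Submodule.exists_dual_map_eq_bot_of_notMem hnot inferInstance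
  have hf (v : Fin 3 → ℂ) : eval v (∑ i, C (f (Pi.single i 1)) * X i) = f v := by
    conv_rhs => rw [← Finset.univ_sum_single v]
    simp only [map_sum, map_mul, eval_C, eval_X]
    refine Finset.sum_congr rfl fun i _ => ?_
    rw [mul_comm, ← smul_eq_mul, ← map_smul, ← Pi.single_smul, smul_eq_mul, mul_one]
  refine ⟨∑ i, C (f (Pi.single i 1)) * X i,
    IsHomogeneous.sum _ _ _ fun i _ => isHomogeneous_C_mul_X _ _, ?_, ?_⟩
  · rwa [VanAt, hf]
  · rw [VanAt, hf]
    exact (Submodule.eq_bot_iff _).mp hfq _ ⟨q.rep, Submodule.mem_span_singleton_self _, rfl⟩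

theorem exists_isHomogeneous_not_vanAt_vanAt {W : Finset P2} {L : MvPolynomial (Fin 3) ℂ}
    (hL : L.IsHomogeneous 1) (hLW : ∀ q ∈ W, ¬VanAt L q) {N : ℕ} (hN : W.card ≤ N + 1)
    {p : P2} (hp : p ∈ W) :
    ∃ f : MvPolynomial (Fin 3) ℂ, f.IsHomogeneous N ∧ ¬VanAt f p ∧ ∀ q ∈ W, q ≠ p → VanAt f q := by
  classical
  have hsep (q : P2) : ∃ M : MvPolynomial (Fin 3) ℂ,
      M.IsHomogeneous 1 ∧ (q ≠ p → ¬VanAt M p ∧ VanAt M q) := by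
    by_cases hq : q = p
    · exact ⟨0, isHomogeneous_zero _ _ _, fun h => (h hq).elim⟩
    · obtain ⟨M, hM⟩ := exists_linear_not_vanAt_vanAt (Ne.symm hq)
      exact ⟨M, hM.1, fun _ => hM.2⟩
  choose M hM using hsep
  refine ⟨L ^ (N + 1 - W.card) * ∏ q ∈ W.erase p, M q, ?_, ?_, ?_⟩
  · have := (hL.pow (N + 1 - W.card)).mul
      (IsHomogeneous.prod (W.erase p) M (fun _ => 1) fun q _ => (hM q).1)
    rwa [Finset.sum_const, smul_eq_mul, mul_one, one_mul, Finset.card_erase_of_mem hp,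
      show N + 1 - W.card + (W.card - 1) = N by have := Finset.card_pos.mpr ⟨p, hp⟩; omega] at this
  · rw [VanAt, map_mul, map_pow, map_prod]
    exact mul_ne_zero (pow_ne_zero _ (hLW p hp))
      (Finset.prod_ne_zero_iff.mpr fun q hq => ((hM q).2 (Finset.ne_of_mem_erase hq)).1)
  · intro q hq hqp
    rw [VanAt, map_mul, map_prod,
      Finset.prod_eq_zero (Finset.mem_erase.mpr ⟨hqp, hq⟩) (show eval q.rep (M q) = 0 from
        ((hM q).2 hqp).2), mul_zero]

theorem finrank_Vsp_add_card {W : Finset P2} {L : MvPolynomial (Fin 3) ℂ}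
    (hL : L.IsHomogeneous 1) (hLW : ∀ q ∈ W, ¬VanAt L q) {N : ℕ} (hN : W.card ≤ N + 1) :
    Module.finrank ℂ (Vsp N ↑W) + W.card =
      Module.finrank ℂ (homogeneousSubmodule (Fin 3) ℂ N) := by
  let ev : MvPolynomial (Fin 3) ℂ →ₗ[ℂ] (W → ℂ) :=
    LinearMap.pi fun q => (aeval (q : P2).rep).toLinearMap
  have hker : vanishing ↑W = LinearMap.ker ev := by
    ext G
    simp [vanishing, VanAt, ev, funext_iff]
  have hmap : (homogeneousSubmodule (Fin 3) ℂ N).map ev = ⊤ := by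
    refine eq_top_iff.mpr fun g _ => ?_
    choose f hf using fun q : W => exists_isHomogeneous_not_vanAt_vanAt hL hLW hN q.2
    refine ⟨∑ q, (g q / eval (q : P2).rep (f q)) • f q,
      Submodule.sum_mem _ fun q _ => Submodule.smul_mem _ _ (hf q).1, funext fun q => ?_⟩
    have hfq : eval (q : P2).rep (f q) ≠ 0 := (hf q).2.1
    rw [map_sum, Finset.sum_apply, Finset.sum_eq_single q]
    · simp [ev, div_mul_cancel₀ _ hfq]
    · intro r _ hrq
      have : eval (q : P2).rep (f r) = 0 := (hf r).2.2 q q.2 fun h => hrq (Subtype.ext h).symm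
      simp [ev, this]
    · simp
  rw [Vsp, hker, ← Submodule.finrank_inf_ker_add_finrank_map (homogeneousSubmodule (Fin 3) ℂ N) ev,
    hmap, finrank_top, Module.finrank_fintype_fun_eq_card, Fintype.card_coe]

theorem mem_span_of_mem_Vsp {F₁ F₂ : MvPolynomial (Fin 3) ℂ} {e m : ℕ}
    (h₁ : F₁.IsHomogeneous e) (h₂ : F₂.IsHomogeneous e) (hrel : IsRelPrime F₁ F₂) (hF₂ : F₂ ≠ 0)
    {W : Finset P2} (hW : ↑W ⊆ zeroSet F₁ F₂)
    (hdim : Module.finrank ℂ (Vsp (m + 2 * e) ↑W) + e ^ 2 =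
      Module.finrank ℂ (homogeneousSubmodule (Fin 3) ℂ (m + 2 * e)))
    {H : MvPolynomial (Fin 3) ℂ} (hH : H ∈ Vsp (m + 2 * e) ↑W) : H ∈ Ideal.span {F₁, F₂} := by
  have hle : LinearMap.range (pairMul F₁ F₂ (m + e)) ≤ Vsp (m + 2 * e) ↑W := by
    rintro _ ⟨⟨a, b⟩, rfl⟩
    refine ⟨?_, fun p hp => ?_⟩
    · rw [pairMul_apply, two_mul, ← add_assoc]
      exact add_mem (mul_mem_homogeneousSubmodule h₁ a.2) (mul_mem_homogeneousSubmodule h₂ b.2)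
    · obtain ⟨hp₁, hp₂⟩ := hW hp
      unfold VanAt at hp₁ hp₂ ⊢
      simp [hp₁, hp₂]
  have : FiniteDimensional ℂ (Vsp (m + 2 * e) ↑W) := Submodule.finiteDimensional_of_le inf_le_left
  have hrank := (pairMul F₁ F₂ (m + e)).finrank_range_add_finrank_ker
  rw [Module.finrank_prod] at hrank
  have hker := finrank_ker_pairMul_le h₁ h₂ hrel hF₂ m
  have hhilb := finrank_homogeneousSubmodule_add_two_mul (K := ℂ) m e
  rw [← Submodule.eq_of_le_of_finrank_le hle (by omega)] at hH
  obtain ⟨⟨a, b⟩, rfl⟩ := hH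
  exact Ideal.mem_span_pair.mpr ⟨a, b, rfl⟩

theorem stmt_3 (e : ℕ) (he : 1 ≤ e) (F₁ F₂ : MvPolynomial (Fin 3) ℂ)
    (h1 : F₁.IsHomogeneous e) (h2 : F₂.IsHomogeneous e)
    (hfin : (zeroSet F₁ F₂).Finite) (hcard : (zeroSet F₁ F₂).ncard = e ^ 2) :
    ∀ G : MvPolynomial (Fin 3) ℂ, G.IsHomogeneous (2 * e - 1) →
      (∀ p ∈ zeroSet F₁ F₂, VanAt G p) →
      ∃ a b : MvPolynomial (Fin 3) ℂ, a.IsHomogeneous (e - 1) ∧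
        b.IsHomogeneous (e - 1) ∧ G = a * F₁ + b * F₂ := by
  intro G hG hGW
  obtain ⟨t, ht⟩ := exists_lineForm_not_vanAt hfin
  have hne := fun w (hw : w ≠ 0) => eval_restrictLine_ne_zero h1 h2 ht hw
  have hbar₁ : restrictLine t F₁ ≠ 0 :=
    ne_zero_of_forall_eval_ne_zero (h2.restrictLine t) (by omega) hne
  have hbar₂ : restrictLine t F₂ ≠ 0 :=
    ne_zero_of_forall_eval_ne_zero (h1.restrictLine t) (by omega) fun w hw h₂ h₁ => hne w hw h₁ h₂
  have hcard' : hfin.toFinset.card = e ^ 2 := by rw [← Set.ncard_eq_toFinset_card _ hfin, hcard]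
  have hdim := finrank_Vsp_add_card (W := hfin.toFinset) (N := e ^ 2 + 2 * e)
    (isHomogeneous_lineForm t) (by simpa using ht) (by omega)
  have hℓG : lineForm t ^ (e ^ 2 + 1) * G ∈ Vsp (e ^ 2 + 2 * e) ↑hfin.toFinset := by
    refine ⟨(mem_homogeneousSubmodule _ _).mpr ?_, fun p hp => ?_⟩
    · have := ((isHomogeneous_lineForm t).pow (e ^ 2 + 1)).mul hG
      rwa [show 1 * (e ^ 2 + 1) + (2 * e - 1) = e ^ 2 + 2 * e by omega] at this
    · rw [VanAt, map_mul, hGW p (by simpa using hp), mul_zero]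
  have hℓG_span : lineForm t ^ (e ^ 2 + 1) * G ∈ Ideal.span {F₁, F₂} :=
    mem_span_of_mem_Vsp h1 h2 (isRelPrime_of_restrictLine t h1 hbar₁ hne)
      (fun h => hbar₂ (by rw [h, map_zero])) (by simp) (by rwa [hcard'] at hdim) hℓG
  have hGspan : G ∈ Ideal.span {F₁, F₂} :=
    mem_span_pair_of_pow_mul_mem (restrictLine t) (restrictLine_surjective t) (lineForm_ne_zero t)
      (ker_restrictLine t) (isRelPrime_of_forall_eval_ne_zero (h1.restrictLine t) hbar₁ hne)
      hbar₂ _ hℓG_span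
  exact exists_isHomogeneous_of_mem_span_pair h1 h2
    (by rwa [show e - 1 + e = 2 * e - 1 by omega]) hGspan

end
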